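/- arXiv:2006.01616 — 6 statements merged into one kernel-verified Lean document; each statement's English description precedes it below -/
import Mathlib

section
/- For every positive integer n, the open neighborhood graph of the path P_{2n} is isomorphic to the disjoint union of two copies of the path P_n, and the open neighborhood graph of P_{2n+1} is isomorphic to the disjoint union of P_n and P_{n+1}. -/
open SimpleGraph

/-- The open neighborhood graph of `G`: distinct vertices are adjacent iff they have a
common neighbor in `G`. -/
def ong {V : Type*} (G : SimpleGraph V) : SimpleGraph V where
  Adj u v := u ≠ v ∧ ∃ w, G.Adj u w ∧ G.Adj v w
  symm := ⟨by rintro u v ⟨h, w, h1, h2⟩; exact ⟨h.symm, w, h2, h1⟩⟩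
  loopless := ⟨by rintro u ⟨h, -⟩; exact h rfl⟩

/-- A set of vertices is an open packing if no two distinct members have a common neighbor. -/
def IsOpenPacking {V : Type*} (G : SimpleGraph V) (P : Set V) : Prop :=
  ∀ ⦃u⦄, u ∈ P → ∀ ⦃v⦄, v ∈ P → u ≠ v → ∀ w, ¬(G.Adj u w ∧ G.Adj v w)

/-- An independent set of vertices. -/
def IsIndep {V : Type*} (G : SimpleGraph V) (s : Set V) : Prop :=
  s.Pairwise fun u v => ¬ G.Adj u v

/-- All maximal open packings of `G` have the same cardinality. -/
def InU {V : Type*} (G : SimpleGraph V) : Prop :=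
  ∀ P Q : Set V, Maximal (IsOpenPacking G) P → Maximal (IsOpenPacking G) Q →
    P.ncard = Q.ncard

/-- All maximal independent sets of `G` have the same cardinality. -/
def WellCovered {V : Type*} (G : SimpleGraph V) : Prop :=
  ∀ P Q : Set V, Maximal (IsIndep G) P → Maximal (IsIndep G) Q → P.ncard = Q.ncard

/-- A leaf is a vertex with exactly one neighbor. -/
def IsLeaf {V : Type*} (G : SimpleGraph V) (v : V) : Prop :=
  ∃ u, G.neighborSet v = {u}

/-- A support vertex is one adjacent to a leaf. -/
def IsSupport {V : Type*} (G : SimpleGraph V) (s : V) : Prop :=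
  ∃ l, G.neighborSet l = {s}
/-
In a path two vertices have a common neighbour exactly when their indices differ by 2, so the open
neighbourhood graph of `P_m` splits into the even-indexed vertices `0, 2, 4, …` and the odd-indexed
vertices `1, 3, …`, each inducing a path; these have `⌈m/2⌉` and `⌊m/2⌋` vertices.
-/

lemma ong_pathGraph_adj {m : ℕ} (u v : Fin m) :
    (ong (pathGraph m)).Adj u v ↔ (u : ℕ) + 2 = v ∨ (v : ℕ) + 2 = u := by
  constructor
  · rintro ⟨hne, w, huw, hvw⟩
    rw [pathGraph_adj] at huw hvw
    have : (u : ℕ) ≠ v := Fin.val_ne_of_ne hne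
    omega
  · intro h
    have hm : min (u : ℕ) v + 1 < m := by omega
    refine ⟨fun huv => by simp [huv] at h, ⟨min (u : ℕ) v + 1, hm⟩, ?_, ?_⟩ <;>
      simp only [pathGraph_adj] <;> omega

def finEvenOddEquiv (m : ℕ) : Fin m ≃ Fin ((m + 1) / 2) ⊕ Fin (m / 2) where
  toFun v := if h : (v : ℕ) % 2 = 0 then .inl ⟨v / 2, by omega⟩ else .inr ⟨v / 2, by omega⟩
  invFun
    | .inl i => ⟨2 * i, by omega⟩
    | .inr j => ⟨2 * j + 1, by omega⟩
  left_inv v := by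
    by_cases h : (v : ℕ) % 2 = 0 <;> simp only [h, dite_true, dite_false] <;> ext <;> simp <;> omega
  right_inv
    | .inl i => by simp
    | .inr j => by simp [Nat.add_mod]; ext; simp; omega

def ongPathGraphIso (m : ℕ) :
    ong (pathGraph m) ≃g (pathGraph ((m + 1) / 2) ⊕g pathGraph (m / 2)) where
  toEquiv := finEvenOddEquiv m
  map_rel_iff' {u v} := by
    rw [ong_pathGraph_adj]
    by_cases hu : (u : ℕ) % 2 = 0 <;> by_cases hv : (v : ℕ) % 2 = 0 <;>
      simp [finEvenOddEquiv, hu, hv, sum_adj, pathGraph_adj] <;> omega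

lemma nonempty_ong_pathGraph_iso {m a b : ℕ} (ha : (m + 1) / 2 = a) (hb : m / 2 = b) :
    Nonempty (ong (pathGraph m) ≃g (pathGraph a ⊕g pathGraph b)) := by
  subst ha hb
  exact ⟨ongPathGraphIso m⟩

theorem stmt4_general (n : ℕ) :
    Nonempty (ong (pathGraph (2 * n)) ≃g (pathGraph n ⊕g pathGraph n)) ∧
    Nonempty (ong (pathGraph (2 * n + 1)) ≃g (pathGraph n ⊕g pathGraph (n + 1))) := by
  refine ⟨nonempty_ong_pathGraph_iso (by omega) (by omega), ?_⟩
  exact (nonempty_ong_pathGraph_iso (by omega) (by omega)).map (·.trans Iso.sumComm)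

theorem stmt4 (n : ℕ) (hn : 1 ≤ n) :
    Nonempty (ong (pathGraph (2 * n)) ≃g (pathGraph n ⊕g pathGraph n)) ∧
    Nonempty (ong (pathGraph (2 * n + 1)) ≃g (pathGraph n ⊕g pathGraph (n + 1))) :=
  stmt4_general n
end

section
/- The path P_n has all of its maximal open packings of equal cardinality if and only if n ∈ {1, 2, 3, 4, 8}. -/
open SimpleGraph

/-!
On `P_n` two vertices have a common neighbour exactly when their indices differ by two, so a
maximal open packing is a set of indices with no two at distance two that contains `x - 2` or
`x + 2` for every index `x` it misses. For `n ∈ {1, 2, 3, 4, 8}` these sets are enumerated.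
For every other `n ≥ 5` the residues `{0, 1} mod 4` form a maximal open packing of size about
`n / 2`, while the residues `{2, 3} mod 6`, completed at the right end, form one of size about
`n / 3`; the exact counts never agree.
-/

lemma Nat.count_congr {p q : ℕ → Prop} [DecidablePred p] [DecidablePred q] {n : ℕ}
    (h : ∀ k < n, p k ↔ q k) : Nat.count p n = Nat.count q n :=
  le_antisymm (Nat.count_mono_left fun k hk => (h k hk).1)
    (Nat.count_mono_left fun k hk => (h k hk).2)

lemma Nat.count_mod_four_lt_two (m : ℕ) :
    Nat.count (fun x => x % 4 < 2) m = 2 * (m / 4) + min (m % 4) 2 := by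
  induction m with
  | zero => simp
  | succ m ih => rw [Nat.count_succ, ih]; split_ifs <;> omega

lemma Nat.count_mod_six_eq_two_or_three (m : ℕ) :
    Nat.count (fun x => x % 6 = 2 ∨ x % 6 = 3) m =
      2 * (m / 6) + (min (m % 6) 4 - min (m % 6) 2) := by
  induction m with
  | zero => simp
  | succ m ih => rw [Nat.count_succ, ih]; split_ifs <;> omega

lemma Fin.ncard_setOf_eq_count (p : ℕ → Prop) [DecidablePred p] (n : ℕ) :
    {x : Fin n | p x}.ncard = Nat.count p n := by
  rw [Nat.count_eq_card_filter_range, ← Set.ncard_coe_finset,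
    ← Set.ncard_image_of_injective _ Fin.val_injective]
  congr 1
  ext k
  simp [Fin.exists_iff, and_comm]

lemma IsOpenPacking.mono {V : Type*} {G : SimpleGraph V} {P Q : Set V}
    (hQ : IsOpenPacking G Q) (hPQ : P ⊆ Q) : IsOpenPacking G P :=
  fun _ hu _ hv => hQ (hPQ hu) (hPQ hv)

lemma InU.of_forall_finset {V : Type*} [Finite V] {G : SimpleGraph V} {c : ℕ}
    (h : ∀ F : Finset V, Maximal (IsOpenPacking G) (F : Set V) → F.card = c) : InU G := by
  have hcard : ∀ P : Set V, Maximal (IsOpenPacking G) P → P.ncard = c := by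
    intro P hP
    obtain ⟨F, rfl⟩ := P.toFinite.exists_finset_coe
    rw [Set.ncard_coe_finset, h F hP]
  exact fun P Q hP hQ => (hcard P hP).trans (hcard Q hQ).symm

namespace SimpleGraph

variable {n : ℕ}

lemma isOpenPacking_pathGraph_iff {P : Set (Fin n)} :
    IsOpenPacking (pathGraph n) P ↔ ∀ u ∈ P, ∀ v ∈ P, (u : ℕ) + 2 ≠ v := by
  constructor
  · intro h u hu v hv huv
    have hne : u ≠ v := by rintro rfl; omega
    exact h hu hv hne ⟨u + 1, by omega⟩
      ⟨pathGraph_adj.2 (by simp), pathGraph_adj.2 (by simp; omega)⟩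
  · intro h u hu v hv hne w ⟨huw, hvw⟩
    have := Fin.val_ne_of_ne hne
    have := h u hu v hv
    have := h v hv u hu
    simp only [pathGraph_adj] at huw hvw
    omega

lemma maximal_isOpenPacking_pathGraph_iff {P : Set (Fin n)} :
    Maximal (IsOpenPacking (pathGraph n)) P ↔
      (∀ u ∈ P, ∀ v ∈ P, (u : ℕ) + 2 ≠ v) ∧
        ∀ x ∉ P, ∃ y ∈ P, (x : ℕ) + 2 = y ∨ (y : ℕ) + 2 = x := by
  rw [Set.maximal_iff_forall_insert fun _ _ hQ hPQ => hQ.mono hPQ]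
  simp only [isOpenPacking_pathGraph_iff, Set.mem_insert_iff]
  refine and_congr_right fun hP => forall₂_congr fun x hx => ?_
  constructor
  · intro h
    by_contra! hfar
    refine h ?_
    rintro u (rfl | hu) v (rfl | hv)
    · omega
    · exact (hfar v hv).1
    · exact (hfar u hu).2
    · exact hP u hu v hv
  · rintro ⟨y, hy, hxy | hxy⟩ h
    · exact h x (Or.inl rfl) y (Or.inr hy) hxy
    · exact h y (Or.inr hy) x (Or.inl rfl) hxy

lemma inU_pathGraph_of_forall_finset {c : ℕ}
    (h : ∀ F : Finset (Fin n), (∀ u ∈ F, ∀ v ∈ F, (u : ℕ) + 2 ≠ v) →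
      (∀ x ∉ F, ∃ y ∈ F, (x : ℕ) + 2 = y ∨ (y : ℕ) + 2 = x) → F.card = c) :
    InU (pathGraph n) :=
  InU.of_forall_finset fun F hF => by
    simp only [maximal_isOpenPacking_pathGraph_iff, Finset.mem_coe] at hF
    exact h F hF.1 hF.2

lemma maximal_isOpenPacking_pathGraph_mod_four :
    Maximal (IsOpenPacking (pathGraph n)) {x : Fin n | (x : ℕ) % 4 < 2} := by
  refine maximal_isOpenPacking_pathGraph_iff.2 ⟨fun u hu v hv => ?_, fun x hx => ?_⟩
  · simp only [Set.mem_ofPred_eq] at hu hv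
    omega
  · simp only [Set.mem_ofPred_eq, not_lt] at hx ⊢
    exact ⟨⟨x - 2, by omega⟩, by simp only; omega, Or.inr (by simp only; omega)⟩

lemma maximal_isOpenPacking_pathGraph_mod_six :
    Maximal (IsOpenPacking (pathGraph n))
      {x : Fin n | (x : ℕ) % 6 = 2 ∨ (x : ℕ) % 6 = 3 ∨
        (n ≤ x + 2 ∧ (x : ℕ) % 6 < 2)} := by
  refine maximal_isOpenPacking_pathGraph_iff.2 ⟨fun u hu v hv => ?_, fun x hx => ?_⟩
  · simp only [Set.mem_ofPred_eq] at hu hv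
    omega
  · simp only [Set.mem_ofPred_eq] at hx ⊢
    by_cases hx4 : 4 ≤ (x : ℕ) % 6
    · exact ⟨⟨x - 2, by omega⟩, by simp only; omega, Or.inr (by simp only; omega)⟩
    · exact ⟨⟨x + 2, by omega⟩, by simp only; omega, Or.inl rfl⟩

lemma not_inU_pathGraph (h5 : 5 ≤ n) (h8 : n ≠ 8) : ¬ InU (pathGraph n) := by
  intro h
  have hcard := h _ _ maximal_isOpenPacking_pathGraph_mod_four
    maximal_isOpenPacking_pathGraph_mod_six
  obtain ⟨m, rfl⟩ : ∃ m, n = m + 2 := ⟨n - 2, by omega⟩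
  rw [Fin.ncard_setOf_eq_count (fun x => x % 4 < 2), Nat.count_mod_four_lt_two,
    Fin.ncard_setOf_eq_count
      (fun x => x % 6 = 2 ∨ x % 6 = 3 ∨ (m + 2 ≤ x + 2 ∧ x % 6 < 2)),
    Nat.count_succ _ (m + 1), Nat.count_succ _ m,
    Nat.count_congr (q := fun x => x % 6 = 2 ∨ x % 6 = 3) (by intro k hk; omega),
    Nat.count_mod_six_eq_two_or_three] at hcard
  split_ifs at hcard <;> omega

end SimpleGraph

theorem stmt5 (n : ℕ) (hn : 1 ≤ n) :
    InU (pathGraph n) ↔ n ∈ ({1, 2, 3, 4, 8} : Set ℕ) := by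
  constructor
  · intro h
    by_contra hmem
    simp only [Set.mem_insert_iff, Set.mem_singleton_iff] at hmem
    exact not_inU_pathGraph (by omega) (by omega) h
  · rintro (rfl | rfl | rfl | rfl | rfl : n = 1 ∨ n = 2 ∨ n = 3 ∨ n = 4 ∨ n = 8)
    · exact inU_pathGraph_of_forall_finset (c := 1) (by decide)
    · exact inU_pathGraph_of_forall_finset (c := 2) (by decide)
    · exact inU_pathGraph_of_forall_finset (c := 2) (by decide)
    · exact inU_pathGraph_of_forall_finset (c := 2) (by decide)
    · set_option maxRecDepth 4000 in
      exact inU_pathGraph_of_forall_finset (c := 4) (by decide)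
end

section
/- The cycle C_n has all of its maximal open packings of equal cardinality if and only if n ∈ {3, 4, 5, 6, 7, 8, 10, 14}. -/
open SimpleGraph

/-!
Maximal open packings of `C_n` are the sets `s ⊆ ℤ/n` with `s ∩ (s + 2) = ∅` such that every
`i ∉ s` has `i + 2 ∈ s` or `i - 2 ∈ s`. Hence `s` and `s + 2` are disjoint while `s`, `s + 2`,
`s - 2` cover, so `n ≤ 3|s|` and `2|s| ≤ n`; for even `n` translation by `2` preserves parity and
the same bounds hold in each parity class, with `n/2` in place of `n`. For
`n ∈ {3, 4, 5, 6, 7, 8, 10, 14}` these bounds pin down `|s|`.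

Conversely, if `n = 4a + 3b` with `b ≥ 4`, the cyclic words `(1100)^a (100)^b` and
`(1100)^(a+3) (100)^(b-4)` are maximal open packings of sizes `2a + b` and `2a + b + 2`. This
covers `n ∈ {12, 15, 16}` and all `n ≥ 18`; the remaining `n ∈ {9, 11, 13, 17}` have explicit
pairs of maximal open packings of different sizes.
-/

open Finset

section StepPacking

variable {G : Type*} [AddGroup G] [DecidableEq G] {d : G} {s E : Finset G}

lemma two_mul_card_inter_le (hsep : ∀ i ∈ s, i + d ∉ s) (hE : ∀ i, i + d ∈ E ↔ i ∈ E) :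
    2 * #(s ∩ E) ≤ #E := by
  have hdisj : Disjoint (s ∩ E) ((s ∩ E).image (· + d)) := by
    rw [Finset.disjoint_left]
    intro i hi hi'
    obtain ⟨j, hj, rfl⟩ := mem_image.1 hi'
    exact hsep j (mem_inter.1 hj).1 (mem_inter.1 hi).1
  have hsub : s ∩ E ∪ (s ∩ E).image (· + d) ⊆ E := by
    refine union_subset inter_subset_right ?_
    intro i hi
    obtain ⟨j, hj, rfl⟩ := mem_image.1 hi
    exact (hE j).2 (mem_inter.1 hj).2
  calc 2 * #(s ∩ E) = #(s ∩ E ∪ (s ∩ E).image (· + d)) := by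
        rw [card_union_of_disjoint hdisj, card_image_of_injective _ (add_left_injective d)]
        ring
    _ ≤ #E := card_le_card hsub

lemma card_le_three_mul_card_inter (hdom : ∀ i ∉ s, i + d ∈ s ∨ i - d ∈ s)
    (hE : ∀ i, i + d ∈ E ↔ i ∈ E) : #E ≤ 3 * #(s ∩ E) := by
  have hcover : E ⊆ s ∩ E ∪ (s ∩ E).image (· - d) ∪ (s ∩ E).image (· + d) := by
    intro i hi
    by_cases his : i ∈ s
    · simp [his, hi]
    rcases hdom i his with h | h
    · refine mem_union_left _ (mem_union_right _ (mem_image.2 ⟨i + d, ?_, add_sub_cancel_right i d⟩))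
      exact mem_inter.2 ⟨h, (hE i).2 hi⟩
    · refine mem_union_right _ (mem_image.2 ⟨i - d, ?_, sub_add_cancel i d⟩)
      exact mem_inter.2 ⟨h, (hE _).1 (by rwa [sub_add_cancel])⟩
  calc #E ≤ #(s ∩ E ∪ (s ∩ E).image (· - d) ∪ (s ∩ E).image (· + d)) := card_le_card hcover
    _ ≤ #(s ∩ E) + #((s ∩ E).image (· - d)) + #((s ∩ E).image (· + d)) :=
        (card_union_le _ _).trans (Nat.add_le_add_right (card_union_le _ _) _)
    _ = 3 * #(s ∩ E) := by
        rw [card_image_of_injective _ sub_left_injective,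
          card_image_of_injective _ (add_left_injective d)]
        ring

end StepPacking

theorem Nat.count_mul_of_periodic {p : ℕ → Prop} [DecidablePred p] {q : ℕ}
    (hp : Function.Periodic p q) (a : ℕ) : Nat.count p (q * a) = Nat.count p q * a := by
  induction a with
  | zero => simp
  | succ a ih =>
    have hshift : (fun k ↦ p (q * a + k)) = p := funext fun k ↦ by
      rw [add_comm, mul_comm]
      exact hp.nat_mul a k
    simp only [Nat.mul_succ, Nat.count_add, ih, hshift]

theorem Fin.card_filter_val_eq_count (m : ℕ) (p : ℕ → Prop) [DecidablePred p] :
    #{i : Fin m | p i} = Nat.count p m := by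
  rw [Nat.count_eq_card_filter_range, ← card_map Fin.valEmbedding]
  congr 1
  ext x
  simp only [mem_map, mem_filter, mem_univ, true_and, Fin.valEmbedding_apply, mem_range]
  exact ⟨fun ⟨i, hi, hx⟩ ↦ hx ▸ ⟨i.isLt, hi⟩, fun ⟨hx, hp⟩ ↦ ⟨⟨x, hx⟩, hp, rfl⟩⟩

lemma Fin.even_val_add_iff {m : ℕ} (hm : Even m) (i j : Fin m) :
    Even (i + j).val ↔ (Even i.val ↔ Even j.val) := by
  rw [Fin.val_add, Nat.even_iff, Nat.mod_mod_of_dvd _ (even_iff_two_dvd.1 hm), ← Nat.even_iff,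
    Nat.even_add]

section CycleGraph

variable {n : ℕ}

lemma Fin.add_two_ne_self (i : Fin (n + 3)) : i + 2 ≠ i := by
  rw [Ne, add_eq_left, Fin.ext_iff, Fin.val_two, Fin.val_zero]
  omega

lemma Fin.val_add_two_eq_ite (i : Fin (n + 3)) :
    (i + 2).val = if n + 3 ≤ i.val + 2 then i.val + 2 - (n + 3) else i.val + 2 := by
  rw [Fin.val_add_eq_ite, Fin.val_two]

lemma Fin.val_sub_two_eq_ite (i : Fin (n + 3)) :
    (i - 2).val = if 2 ≤ i.val then i.val - 2 else i.val + (n + 3) - 2 := by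
  have h := Fin.val_add_two_eq_ite (i - 2)
  rw [sub_add_cancel] at h
  have := (i - 2).isLt
  split_ifs at h ⊢ <;> omega

lemma cycleGraph_adj_iff_eq {u v : Fin (n + 2)} :
    (cycleGraph (n + 2)).Adj u v ↔ v = u - 1 ∨ v = u + 1 := by
  rw [← mem_neighborSet, cycleGraph_neighborSet]
  rfl

open Fin.CommRing in
lemma exists_common_neighbor_cycleGraph_iff {u v : Fin (n + 2)} (huv : u ≠ v) :
    (∃ w, (cycleGraph (n + 2)).Adj u w ∧ (cycleGraph (n + 2)).Adj v w) ↔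
      v = u + 2 ∨ v = u - 2 := by
  simp only [cycleGraph_adj_iff_eq]
  constructor
  · rintro ⟨w, rfl | rfl, h | h⟩
    · exact absurd (by linear_combination h) huv
    · right; linear_combination -h
    · left; linear_combination -h
    · exact absurd (by linear_combination h) huv
  · rintro (rfl | rfl)
    · exact ⟨u + 1, Or.inr rfl, Or.inl (by ring)⟩
    · exact ⟨u - 1, Or.inl rfl, Or.inr (by ring)⟩

lemma IsOpenPacking.anti {V : Type*} {G : SimpleGraph V} {s t : Set V} (ht : IsOpenPacking G t)
    (hst : s ⊆ t) : IsOpenPacking G s :=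
  fun _ hu _ hv ↦ ht (hst hu) (hst hv)

lemma isOpenPacking_cycleGraph_iff {s : Set (Fin (n + 3))} :
    IsOpenPacking (cycleGraph (n + 3)) s ↔ ∀ i ∈ s, i + 2 ∉ s := by
  constructor
  · intro hs i hi hi2
    have hne : i ≠ i + 2 := (Fin.add_two_ne_self i).symm
    obtain ⟨w, hw⟩ := (exists_common_neighbor_cycleGraph_iff hne).2 (Or.inl rfl)
    exact hs hi hi2 hne w hw
  · intro hs u hu v hv huv w hw
    rcases (exists_common_neighbor_cycleGraph_iff huv).1 ⟨w, hw⟩ with rfl | rfl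
    · exact hs u hu hv
    · exact hs (u - 2) hv (by rwa [sub_add_cancel])

lemma maximal_isOpenPacking_cycleGraph_iff {s : Set (Fin (n + 3))} :
    Maximal (IsOpenPacking (cycleGraph (n + 3))) s ↔
      (∀ i ∈ s, i + 2 ∉ s) ∧ ∀ i ∉ s, i + 2 ∈ s ∨ i - 2 ∈ s := by
  rw [Set.maximal_iff_forall_insert fun _ _ ht hst ↦ ht.anti hst]
  simp only [isOpenPacking_cycleGraph_iff]
  refine and_congr_right fun hs ↦ forall₂_congr fun i _ ↦ ?_
  constructor
  · intro hins
    by_contra! hi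
    refine hins fun j hj hj2 ↦ ?_
    rcases hj with rfl | hj <;> rcases hj2 with hj2 | hj2
    · exact Fin.add_two_ne_self j hj2
    · exact hi.1 hj2
    · exact hi.2 (by rwa [← hj2, add_sub_cancel_right])
    · exact hs j hj hj2
  · rintro (h | h) hins
    · exact hins i (Set.mem_insert i s) (Set.mem_insert_of_mem i h)
    · exact hins (i - 2) (Set.mem_insert_of_mem i h)
        (by rw [sub_add_cancel]; exact Set.mem_insert i s)

end CycleGraph

section CardBounds

variable {n : ℕ} {s : Finset (Fin (n + 3))}

lemma card_bounds_of_maximal (hs : Maximal (IsOpenPacking (cycleGraph (n + 3))) ↑s) :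
    2 * #s ≤ n + 3 ∧ n + 3 ≤ 3 * #s := by
  obtain ⟨hsep, hdom⟩ := maximal_isOpenPacking_cycleGraph_iff.1 hs
  have hE : ∀ i : Fin (n + 3), i + 2 ∈ univ ↔ i ∈ univ := by simp
  have hle := two_mul_card_inter_le hsep hE
  have hge := card_le_three_mul_card_inter hdom hE
  rw [inter_univ, card_univ, Fintype.card_fin] at hle hge
  exact ⟨hle, hge⟩

lemma exists_card_eq_add_bounds_of_even (he : Even (n + 3))
    (hs : Maximal (IsOpenPacking (cycleGraph (n + 3))) ↑s) :
    ∃ x y, #s = x + y ∧ 4 * x ≤ n + 3 ∧ n + 3 ≤ 6 * x ∧ 4 * y ≤ n + 3 ∧ n + 3 ≤ 6 * y := by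
  obtain ⟨hsep, hdom⟩ := maximal_isOpenPacking_cycleGraph_iff.1 hs
  set E : Finset (Fin (n + 3)) := {i | Even i.val}
  have hE : ∀ i, i + 2 ∈ E ↔ i ∈ E := fun i ↦ by
    simp only [E, mem_filter, mem_univ, true_and, Fin.even_val_add_iff he, Fin.val_two, even_two,
      iff_true]
  have hEc : ∀ i, i + 2 ∈ Eᶜ ↔ i ∈ Eᶜ := fun i ↦ by simp only [mem_compl, hE]
  have hswap : ∀ i, i + 1 ∈ E ↔ i ∉ E := fun i ↦ by
    simp only [E, mem_filter, mem_univ, true_and, Fin.even_val_add_iff he, Fin.val_one,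
      Nat.not_even_one, iff_false]
  have hcard : #E = #Eᶜ := le_antisymm
    (card_le_card_of_injOn (· + 1) (fun i hi ↦ mem_compl.2 fun h ↦ (hswap i).1 h hi)
      (add_left_injective 1).injOn)
    (card_le_card_of_injOn (· + 1) (fun i hi ↦ (hswap i).2 (mem_compl.1 hi))
      (add_left_injective 1).injOn)
  have htotal : #E + #Eᶜ = n + 3 := by rw [card_add_card_compl, Fintype.card_fin]
  have hsplit : #(s ∩ E) + #(s ∩ Eᶜ) = #s := by
    rw [← sdiff_eq_inter_compl, card_inter_add_card_sdiff]
  have hle := two_mul_card_inter_le hsep hE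
  have hge := card_le_three_mul_card_inter hdom hE
  have hle' := two_mul_card_inter_le hsep hEc
  have hge' := card_le_three_mul_card_inter hdom hEc
  exact ⟨#(s ∩ E), #(s ∩ Eᶜ), by omega, by omega, by omega, by omega, by omega⟩

lemma inU_cycleGraph_of_mem (h : n + 3 ∈ ({3, 4, 5, 6, 7, 8, 10, 14} : Set ℕ)) :
    InU (cycleGraph (n + 3)) := by
  simp only [Set.mem_insert_iff, Set.mem_singleton_iff] at h
  intro P Q hP hQ
  obtain ⟨s, rfl⟩ := P.toFinite.exists_finset_coe
  obtain ⟨t, rfl⟩ := Q.toFinite.exists_finset_coe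
  rw [Set.ncard_coe_finset, Set.ncard_coe_finset]
  rcases Nat.even_or_odd (n + 3) with he | ho
  · obtain ⟨x, y, hs, hxy⟩ := exists_card_eq_add_bounds_of_even he hP
    obtain ⟨x', y', ht, hxy'⟩ := exists_card_eq_add_bounds_of_even he hQ
    omega
  · have hs := card_bounds_of_maximal hP
    have ht := card_bounds_of_maximal hQ
    have hodd := Nat.odd_iff.1 ho
    omega

end CardBounds

def blockPattern (a x : ℕ) : Prop :=
  if x < 4 * a then x % 4 < 2 else (x - 4 * a) % 3 = 0

instance (a : ℕ) : DecidablePred (blockPattern a) := fun _ ↦ by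
  unfold blockPattern
  infer_instance

def blockPacking (m a : ℕ) : Finset (Fin m) := {i | blockPattern a i}

section Obstructions

variable {n a b : ℕ}

lemma mem_blockPacking {m : ℕ} {i : Fin m} : i ∈ blockPacking m a ↔ blockPattern a i := by
  simp [blockPacking]

lemma card_blockPacking {m : ℕ} (hab : m = 4 * a + 3 * b) : #(blockPacking m a) = 2 * a + b := by
  rw [blockPacking, Fin.card_filter_val_eq_count, hab, Nat.count_add]
  have hprefix : Nat.count (blockPattern a) (4 * a) = Nat.count (· % 4 < 2) (4 * a) :=
    le_antisymm (Nat.count_mono_left fun k hk ↦ by simp [blockPattern, hk])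
      (Nat.count_mono_left fun k hk ↦ by simp [blockPattern, hk])
  have hsuffix : (fun k ↦ blockPattern a (4 * a + k)) = (· % 3 = 0) :=
    funext fun k ↦ by simp [blockPattern]
  rw [hprefix]
  simp only [hsuffix]
  rw [Nat.count_mul_of_periodic (fun x ↦ by simp) a, Nat.count_mul_of_periodic (fun x ↦ by simp) b]
  simp [Nat.count_succ]

lemma blockPacking_add_two_not_mem (hab : n + 3 = 4 * a + 3 * b) :
    ∀ i ∈ blockPacking (n + 3) a, i + 2 ∉ blockPacking (n + 3) a := by
  intro i
  simp only [mem_blockPacking, blockPattern, Fin.val_add_two_eq_ite]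
  have := i.isLt
  split_ifs <;> omega

lemma blockPacking_dominates (hab : n + 3 = 4 * a + 3 * b) :
    ∀ i ∉ blockPacking (n + 3) a,
      i + 2 ∈ blockPacking (n + 3) a ∨ i - 2 ∈ blockPacking (n + 3) a := by
  intro i
  simp only [mem_blockPacking, blockPattern, Fin.val_add_two_eq_ite, Fin.val_sub_two_eq_ite]
  have := i.isLt
  split_ifs <;> omega

lemma not_inU_cycleGraph_of_card_ne {s t : Finset (Fin (n + 3))}
    (hs : (∀ i ∈ s, i + 2 ∉ s) ∧ ∀ i ∉ s, i + 2 ∈ s ∨ i - 2 ∈ s)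
    (ht : (∀ i ∈ t, i + 2 ∉ t) ∧ ∀ i ∉ t, i + 2 ∈ t ∨ i - 2 ∈ t) (hst : #s ≠ #t) :
    ¬ InU (cycleGraph (n + 3)) := fun h ↦ hst <| by
  simpa using h s t (maximal_isOpenPacking_cycleGraph_iff.2 hs)
    (maximal_isOpenPacking_cycleGraph_iff.2 ht)

lemma not_inU_cycleGraph_of_eq_four_mul_add_three_mul (hab : n + 3 = 4 * a + 3 * b)
    (hb : 4 ≤ b) : ¬ InU (cycleGraph (n + 3)) := by
  have hab' : n + 3 = 4 * (a + 3) + 3 * (b - 4) := by omega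
  refine not_inU_cycleGraph_of_card_ne
    ⟨blockPacking_add_two_not_mem hab, blockPacking_dominates hab⟩
    ⟨blockPacking_add_two_not_mem hab', blockPacking_dominates hab'⟩ ?_
  rw [card_blockPacking hab, card_blockPacking hab']
  omega

lemma not_inU_cycleGraph_nine : ¬ InU (cycleGraph 9) :=
  not_inU_cycleGraph_of_card_ne (n := 6) (s := {0, 3, 6}) (t := {0, 3, 4, 8})
    (by decide) (by decide) (by decide)

lemma not_inU_cycleGraph_eleven : ¬ InU (cycleGraph 11) :=
  not_inU_cycleGraph_of_card_ne (n := 8) (s := {0, 4, 5, 10}) (t := {0, 1, 4, 5, 8})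
    (by decide) (by decide) (by decide)

lemma not_inU_cycleGraph_thirteen : ¬ InU (cycleGraph 13) :=
  not_inU_cycleGraph_of_card_ne (n := 10) (s := {0, 1, 4, 7, 10}) (t := {0, 1, 5, 6, 9, 10})
    (by decide) (by decide) (by decide)

lemma not_inU_cycleGraph_seventeen : ¬ InU (cycleGraph 17) :=
  not_inU_cycleGraph_of_card_ne (n := 14) (s := {0, 1, 4, 5, 8, 11, 14})
    (t := {0, 1, 6, 7, 12, 13}) (by decide) (by decide) (by decide)

end Obstructions

theorem stmt6 (n : ℕ) (hn : 3 ≤ n) :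
    InU (cycleGraph n) ↔ n ∈ ({3, 4, 5, 6, 7, 8, 10, 14} : Set ℕ) := by
  obtain ⟨n, rfl⟩ := Nat.exists_eq_add_of_le' hn
  refine ⟨fun h ↦ ?_, inU_cycleGraph_of_mem⟩
  by_contra hmem
  simp only [Set.mem_insert_iff, Set.mem_singleton_iff] at hmem
  obtain rfl | rfl | rfl | rfl | hb :
      n = 6 ∨ n = 8 ∨ n = 10 ∨ n = 14 ∨ 12 ≤ n + 3 - 4 * ((n + 3) % 3) := by omega
  · exact not_inU_cycleGraph_nine h
  · exact not_inU_cycleGraph_eleven h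
  · exact not_inU_cycleGraph_thirteen h
  · exact not_inU_cycleGraph_seventeen h
  · exact not_inU_cycleGraph_of_eq_four_mul_add_three_mul
      (a := (n + 3) % 3) (b := (n + 3 - 4 * ((n + 3) % 3)) / 3) (by omega) (by omega) h
end

section
/- Let G be a graph with at least one support vertex such that all maximal open packings of G have the same cardinality. If G' is obtained from G by adding a new vertex w adjacent to a support vertex s of G, then all maximal open packings of G' have the same cardinality. -/
open SimpleGraph

/-- The graph obtained from `G` by adding one new vertex (`none`) adjacent only to `s`. -/
def addLeaf {V : Type*} (G : SimpleGraph V) (s : V) : SimpleGraph (Option V) :=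
  SimpleGraph.fromRel (fun a b =>
    (∃ u v, G.Adj u v ∧ a = some u ∧ b = some v) ∨ (a = none ∧ b = some s))

/-!
The new vertex `w` and a leaf `l` at `s` have the same neighbourhood `{s}` in `G'`, so swapping
them is an automorphism of `G'`, and no open packing contains both. Hence every maximal open
packing of `G'` can be moved, without changing its size, to one avoiding `w`; such a packing is a
maximal open packing of `G`, and the sizes of those are all equal.
-/

namespace SimpleGraph

variable {V W : Type*} {G : SimpleGraph V} {H : SimpleGraph W}

lemma Iso.isOpenPacking_image (f : G ≃g H) {P : Set V} (hP : IsOpenPacking G P) :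
    IsOpenPacking H (f '' P) := by
  rintro _ ⟨u, hu, rfl⟩ _ ⟨v, hv, rfl⟩ huv w ⟨hu', hv'⟩
  rw [← f.apply_symm_apply w, f.map_adj_iff] at hu' hv'
  exact hP hu hv (ne_of_apply_ne f huv) _ ⟨hu', hv'⟩

lemma Iso.maximal_isOpenPacking_image (f : G ≃g H) {P : Set V}
    (hP : Maximal (IsOpenPacking G) P) : Maximal (IsOpenPacking H) (f '' P) := by
  refine ⟨f.isOpenPacking_image hP.1, fun Q hQ hPQ => ?_⟩
  have hQP : f.symm '' Q ⊆ P := hP.2 (f.symm.isOpenPacking_image hQ) fun v hv =>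
    ⟨f v, hPQ ⟨v, hv, rfl⟩, f.symm_apply_apply v⟩
  exact fun w hw => ⟨f.symm w, hQP ⟨w, hw, rfl⟩, f.apply_symm_apply w⟩

def Iso.swapOfNeighborSetEq [DecidableEq V] {a b : V} (h : G.neighborSet a = G.neighborSet b) :
    G ≃g G where
  toEquiv := Equiv.swap a b
  map_rel_iff' := by
    have hab : ∀ w, G.Adj a w ↔ G.Adj b w := fun w => Set.ext_iff.1 h w
    intro x y
    simp only [Equiv.swap_apply_def]
    split_ifs <;> subst_vars <;> grind [G.adj_comm, G.loopless]

section addLeaf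

variable {s : V}

@[simp]
lemma addLeaf_adj_some_some {u v : V} : (addLeaf G s).Adj (some u) (some v) ↔ G.Adj u v := by
  simp only [addLeaf, fromRel_adj, Option.some.injEq]
  grind [G.adj_comm, Adj.ne]

@[simp]
lemma addLeaf_adj_none_left {x : Option V} : (addLeaf G s).Adj none x ↔ x = some s := by
  simp only [addLeaf, fromRel_adj]
  grind

@[simp]
lemma addLeaf_adj_none_right {x : Option V} : (addLeaf G s).Adj x none ↔ x = some s := by
  rw [adj_comm, addLeaf_adj_none_left]

lemma addLeaf_neighborSet_none {l : V} (hl : G.neighborSet l = {s}) :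
    (addLeaf G s).neighborSet none = (addLeaf G s).neighborSet (some l) := by
  have hlv : ∀ v, G.Adj l v ↔ v = s := fun v => Set.ext_iff.1 hl v
  ext (_ | v)
  · simp only [mem_neighborSet, addLeaf_adj_none_right, reduceCtorEq, false_iff]
    exact ((hlv s).2 rfl).ne ∘ Option.some.inj
  · simp [hlv]

lemma isOpenPacking_addLeaf_image_some_iff {P : Set V} :
    IsOpenPacking (addLeaf G s) (some '' P) ↔ IsOpenPacking G P := by
  constructor
  · intro hP u hu v hv huv w ⟨hu', hv'⟩
    exact hP ⟨u, hu, rfl⟩ ⟨v, hv, rfl⟩ ((Option.some_injective V).ne huv) (some w)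
      ⟨addLeaf_adj_some_some.2 hu', addLeaf_adj_some_some.2 hv'⟩
  · rintro hP _ ⟨u, hu, rfl⟩ _ ⟨v, hv, rfl⟩ huv (_ | w)
    · simp only [addLeaf_adj_none_right, Option.some.injEq, not_and]
      rintro rfl rfl
      exact huv rfl
    · simpa using hP hu hv (by simpa using huv) w

lemma maximal_isOpenPacking_of_addLeaf {P : Set V}
    (hP : Maximal (IsOpenPacking (addLeaf G s)) (some '' P)) : Maximal (IsOpenPacking G) P := by
  refine ⟨isOpenPacking_addLeaf_image_some_iff.1 hP.1, fun Q hQ hPQ => ?_⟩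
  have := hP.2 (isOpenPacking_addLeaf_image_some_iff.2 hQ) (Set.image_mono hPQ)
  exact (Set.image_subset_image_iff (Option.some_injective V)).1 this

lemma exists_maximal_isOpenPacking_addLeaf_none_notMem {l : V} (hl : G.neighborSet l = {s})
    {R : Set (Option V)} (hR : Maximal (IsOpenPacking (addLeaf G s)) R) :
    ∃ R', Maximal (IsOpenPacking (addLeaf G s)) R' ∧ none ∉ R' ∧ R'.ncard = R.ncard := by
  classical
  by_cases hnone : none ∈ R
  · have hls : G.Adj l s := by simp [← mem_neighborSet, hl]
    have hlR : some l ∉ R := fun hlR => hR.1 hnone hlR (by simp) (some s) ⟨by simp, by simpa⟩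
    let σ := Iso.swapOfNeighborSetEq (addLeaf_neighborSet_none hl)
    refine ⟨σ '' R, σ.maximal_isOpenPacking_image hR, ?_,
      Set.ncard_image_of_injective R σ.injective⟩
    rintro ⟨x, hx, hσx⟩
    have : x = some l := by simpa [σ, Iso.swapOfNeighborSetEq, Equiv.swap_apply_eq_iff] using hσx
    exact hlR (this ▸ hx)
  · exact ⟨R, hR, hnone, rfl⟩

lemma exists_maximal_isOpenPacking_ncard_eq_of_addLeaf {l : V} (hl : G.neighborSet l = {s})
    {R : Set (Option V)} (hR : Maximal (IsOpenPacking (addLeaf G s)) R) :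
    ∃ P, Maximal (IsOpenPacking G) P ∧ P.ncard = R.ncard := by
  obtain ⟨R', hR', hnone, hcard⟩ := exists_maximal_isOpenPacking_addLeaf_none_notMem hl hR
  have hrange : some '' (some ⁻¹' R') = R' := by
    refine Set.image_preimage_eq_of_subset fun x hx => ?_
    exact Option.ne_none_iff_exists.1 (ne_of_mem_of_not_mem hx hnone)
  refine ⟨some ⁻¹' R', maximal_isOpenPacking_of_addLeaf (hrange ▸ hR'), ?_⟩
  rw [← hcard, ← hrange, Set.ncard_image_of_injective _ (Option.some_injective V), hrange]

end addLeaf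

end SimpleGraph

theorem stmt9_general {V : Type*} (G : SimpleGraph V) (s : V)
    (hs : IsSupport G s) (hU : InU G) : InU (addLeaf G s) := by
  obtain ⟨l, hl⟩ := hs
  intro R₁ R₂ hR₁ hR₂
  obtain ⟨P₁, hP₁, h₁⟩ := exists_maximal_isOpenPacking_ncard_eq_of_addLeaf hl hR₁
  obtain ⟨P₂, hP₂, h₂⟩ := exists_maximal_isOpenPacking_ncard_eq_of_addLeaf hl hR₂
  rw [← h₁, ← h₂]
  exact hU P₁ P₂ hP₁ hP₂

theorem stmt9 {V : Type*} [Fintype V] (G : SimpleGraph V) (s : V)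
    (hs : IsSupport G s) (hU : InU G) : InU (addLeaf G s) :=
  stmt9_general G s hs hU
end

section
/- Let G be a triangle-free graph in which all maximal open packings have the same cardinality. Then no vertex of G is adjacent to two or more support vertices. -/
open SimpleGraph

/-!
If `v` had two distinct support neighbours `s₁, s₂` with leaves `l₁, l₂`, take a maximal open
packing `P ∋ v`. Every neighbour of `l₁, l₂` is a neighbour of `v`, so replacing `v` by `l₁, l₂`
keeps `P` an open packing, now one element larger; extending it to a maximal open packing
contradicts the equality of the cardinalities of maximal open packings.
-/

namespace IsOpenPacking

variable {V : Type*} {G : SimpleGraph V}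

lemma singleton (v : V) : IsOpenPacking G {v} := by
  rintro u rfl w rfl huw
  exact absurd rfl huw

lemma pair_of_neighborSet_eq_singleton {l₁ l₂ s₁ s₂ : V} (hl₁ : G.neighborSet l₁ = {s₁})
    (hl₂ : G.neighborSet l₂ = {s₂}) (hs : s₁ ≠ s₂) : IsOpenPacking G {l₁, l₂} := by
  have hadj₁ (w : V) : G.Adj l₁ w ↔ w = s₁ := Set.ext_iff.1 hl₁ w
  have hadj₂ (w : V) : G.Adj l₂ w ↔ w = s₂ := Set.ext_iff.1 hl₂ w
  rintro u (rfl | rfl) w (rfl | rfl) huw x ⟨hux, hwx⟩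
  · exact huw rfl
  · exact hs (((hadj₁ x).1 hux).symm.trans ((hadj₂ x).1 hwx))
  · exact hs (((hadj₁ x).1 hwx).symm.trans ((hadj₂ x).1 hux))
  · exact huw rfl

lemma sdiff_singleton_union {P L : Set V} {v : V} (hP : IsOpenPacking G P) (hv : v ∈ P)
    (hL : IsOpenPacking G L) (hN : ∀ l ∈ L, G.neighborSet l ⊆ G.neighborSet v) :
    IsOpenPacking G (P \ {v} ∪ L) := by
  have hcross : ∀ p ∈ P \ {v}, ∀ l ∈ L, ∀ x, ¬(G.Adj p x ∧ G.Adj l x) :=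
    fun p ⟨hp, hpv⟩ l hl x ⟨hpx, hlx⟩ => hP hp hv hpv x ⟨hpx, hN l hl hlx⟩
  rintro u (hu | hu) w (hw | hw) huw x ⟨hux, hwx⟩
  · exact hP hu.1 hw.1 huw x ⟨hux, hwx⟩
  · exact hcross u hu w hw x ⟨hux, hwx⟩
  · exact hcross w hw u hu x ⟨hwx, hux⟩
  · exact hL hu hw huw x ⟨hux, hwx⟩

end IsOpenPacking

lemma InU.ncard_le_of_maximal {V : Type*} [Finite V] {G : SimpleGraph V} (hU : InU G)
    {P R : Set V} (hP : Maximal (IsOpenPacking G) P) (hR : IsOpenPacking G R) :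
    R.ncard ≤ P.ncard := by
  obtain ⟨Q, hRQ, hQ⟩ := Finite.exists_le_maximal hR
  rw [hU P Q hP hQ]
  exact Set.ncard_le_ncard hRQ

lemma Set.ncard_sdiff_singleton_union_pair {α : Type*} {P : Set α} {v a b : α} (hP : P.Finite)
    (hv : v ∈ P) (ha : a ∉ P) (hb : b ∉ P) (hab : a ≠ b) :
    (P \ {v} ∪ {a, b}).ncard = P.ncard + 1 := by
  have hdisj : Disjoint (P \ {v}) {a, b} := by
    rw [Set.disjoint_right]
    rintro x (rfl | rfl) hx
    exacts [ha hx.1, hb hx.1]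
  rw [Set.ncard_union_eq hdisj hP.sdiff (Set.toFinite _), Set.ncard_sdiff_singleton_of_mem hv,
    Set.ncard_pair hab]
  have := (Set.ncard_pos hP).2 ⟨v, hv⟩
  omega

theorem stmt11_general {V : Type*} [Fintype V] (G : SimpleGraph V)
    (hU : InU G) :
    ∀ v s₁ s₂, G.Adj v s₁ → G.Adj v s₂ → IsSupport G s₁ → IsSupport G s₂ → s₁ = s₂ := by
  rintro v s₁ s₂ hvs₁ hvs₂ ⟨l₁, hl₁⟩ ⟨l₂, hl₂⟩
  by_contra hs
  obtain ⟨P, hvP, hP⟩ := Finite.exists_le_maximal (IsOpenPacking.singleton (G := G) v)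
  have hv : v ∈ P := hvP rfl
  have hl_notMem {l s s' : V} (hl : G.neighborSet l = {s}) (hvs : G.Adj v s)
      (hvs' : G.Adj v s') (hss' : s ≠ s') : l ∉ P := by
    have hlv : l ≠ v := by
      rintro rfl
      exact hss' (Set.ext_iff.1 hl s' |>.1 hvs').symm
    exact fun hlP => hP.prop hlP hv hlv s ⟨Set.ext_iff.1 hl s |>.2 rfl, hvs⟩
  have hl₁₂ : l₁ ≠ l₂ := by
    rintro rfl
    exact hs (Set.singleton_eq_singleton_iff.1 (hl₁.symm.trans hl₂))
  have hR : IsOpenPacking G (P \ {v} ∪ {l₁, l₂}) := by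
    refine hP.prop.sdiff_singleton_union hv
      (IsOpenPacking.pair_of_neighborSet_eq_singleton hl₁ hl₂ hs) ?_
    rintro l (rfl | rfl)
    · simpa [hl₁] using hvs₁
    · simpa [hl₂] using hvs₂
  have hcard := hU.ncard_le_of_maximal hP hR
  rw [Set.ncard_sdiff_singleton_union_pair (Set.toFinite P) hv (hl_notMem hl₁ hvs₁ hvs₂ hs)
    (hl_notMem hl₂ hvs₂ hvs₁ (Ne.symm hs)) hl₁₂] at hcard
  omega

theorem stmt11 {V : Type*} [Fintype V] (G : SimpleGraph V)
    (htf : G.CliqueFree 3) (hU : InU G) :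
    ∀ v s₁ s₂, G.Adj v s₁ → G.Adj v s₂ → IsSupport G s₁ → IsSupport G s₂ → s₁ = s₂ :=
  stmt11_general G hU
end

section
/- If G is a graph with girth at least 15 and minimum degree at least 2, then G has two maximal open packings of different cardinalities. -/
open SimpleGraph

/-!
Fix a vertex `z` and measure levels by the distance from `z`. As the girth is at least
`15 = 2 * 7 + 1`, the ball of radius `7` around `z` is a tree: adjacent vertices lie on
consecutive levels and every vertex has a unique parent. Choosing one child `x a` of each
neighbour `a` of `z` gives an open packing `S` of size `deg z ≥ 2` on level `2`, and choosing
one grandchild of each vertex on level `4` gives an open packing `Y` on level `6`. Every vertex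
in conflict with `z` (sharing a neighbour with it) is in conflict with `S`, and every vertex in
conflict with `S` but not with `z` lies on level `4`, hence is in conflict with `Y`. Extending
`Y` to an open packing `T` that is maximal among those avoiding the conflicts of `S`, both
`S ∪ T` and `{z} ∪ T` are maximal open packings, of sizes `deg z + |T|` and `1 + |T|`.
-/

namespace SimpleGraph

variable {V : Type*} {H : SimpleGraph V}

def closedNbhd (H : SimpleGraph V) (S : Set V) : Set V :=
  S ∪ {v | ∃ s ∈ S, H.Adj s v}

lemma subset_closedNbhd (S : Set V) : S ⊆ H.closedNbhd S := Set.subset_union_left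

lemma closedNbhd_mono {S T : Set V} (h : S ⊆ T) : H.closedNbhd S ⊆ H.closedNbhd T :=
  Set.union_subset_union h fun _ ⟨s, hs, hsv⟩ => ⟨s, h hs, hsv⟩

lemma closedNbhd_union (S T : Set V) :
    H.closedNbhd (S ∪ T) = H.closedNbhd S ∪ H.closedNbhd T := by
  ext v
  simp only [closedNbhd, Set.mem_union, Set.mem_ofPred_eq]
  grind

end SimpleGraph

section Domination

variable {V : Type*} {H : SimpleGraph V}

lemma IsIndep.union {S T : Set V} (hS : IsIndep H S) (hT : IsIndep H T)
    (hST : Disjoint T (H.closedNbhd S)) : IsIndep H (S ∪ T) := by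
  refine Set.pairwise_union.mpr ⟨hS, hT, fun s hs t ht _ => ⟨fun hst => ?_, fun hts => ?_⟩⟩
  · exact Set.disjoint_left.mp hST ht (Or.inr ⟨s, hs, hst⟩)
  · exact Set.disjoint_left.mp hST ht (Or.inr ⟨s, hs, hts.symm⟩)

lemma IsIndep.maximal_of_closedNbhd_eq_univ {M : Set V} (hM : IsIndep H M)
    (hdom : H.closedNbhd M = Set.univ) : Maximal (IsIndep H) M := by
  refine ⟨hM, fun P hP hMP v hv => ?_⟩
  obtain hvM | ⟨m, hm, hmv⟩ := hdom.symm ▸ Set.mem_univ v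
  · exact hvM
  · by_contra hvM
    exact hP (hMP hm) hv (fun h => hvM (h ▸ hm)) hmv

lemma IsIndep.exists_superset_dominating_compl [Finite V] {Y R : Set V} (hY : IsIndep H Y)
    (hYR : Disjoint Y R) :
    ∃ T, Y ⊆ T ∧ IsIndep H T ∧ Disjoint T R ∧ R ∪ H.closedNbhd T = Set.univ := by
  obtain ⟨T, ⟨hYT, hT, hTR⟩, hTmax⟩ :=
    (Set.toFinite {T : Set V | Y ⊆ T ∧ IsIndep H T ∧ Disjoint T R}).exists_maximal
      ⟨Y, subset_rfl, hY, hYR⟩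
  refine ⟨T, hYT, hT, hTR, Set.eq_univ_of_forall fun v => ?_⟩
  by_contra hv
  simp only [SimpleGraph.closedNbhd, Set.mem_union, Set.mem_ofPred_eq, not_or, not_exists,
    not_and] at hv
  obtain ⟨hvR, hvT, hvadj⟩ := hv
  have hins : IsIndep H (insert v T) :=
    hT.insert fun t ht _ => ⟨fun h => hvadj t ht h.symm, hvadj t ht⟩
  exact hvT (hTmax ⟨hYT.trans (Set.subset_insert v T), hins,
    Set.disjoint_insert_left.mpr ⟨hvR, hTR⟩⟩ (Set.subset_insert v T) (Set.mem_insert v T))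

theorem exists_maximal_isIndep_ncard_ne [Finite V] {S A Y : Set V} (hS : IsIndep H S)
    (hA : IsIndep H A) (hY : IsIndep H Y) (hAS : H.closedNbhd A ⊆ H.closedNbhd S)
    (hYS : Disjoint Y (H.closedNbhd S)) (hSAY : H.closedNbhd S ⊆ H.closedNbhd (A ∪ Y))
    (hcard : A.ncard < S.ncard) :
    ∃ P Q, Maximal (IsIndep H) P ∧ Maximal (IsIndep H) Q ∧ P.ncard ≠ Q.ncard := by
  obtain ⟨T, hYT, hT, hTS, hcover⟩ := hY.exists_superset_dominating_compl hYS
  have hTA : Disjoint T (H.closedNbhd A) := hTS.mono_right hAS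
  have hST : (S ∪ T).ncard = S.ncard + T.ncard :=
    Set.ncard_union_eq (hTS.mono_right (H.subset_closedNbhd S)).symm
  have hAT : (A ∪ T).ncard = A.ncard + T.ncard :=
    Set.ncard_union_eq (hTA.mono_right (H.subset_closedNbhd A)).symm
  refine ⟨S ∪ T, A ∪ T, (hS.union hT hTS).maximal_of_closedNbhd_eq_univ ?_,
    (hA.union hT hTA).maximal_of_closedNbhd_eq_univ ?_, by omega⟩
  · rw [SimpleGraph.closedNbhd_union, hcover]
  · refine Set.eq_univ_of_univ_subset (hcover ▸ Set.union_subset ?_ ?_)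
    · calc H.closedNbhd S ⊆ H.closedNbhd (A ∪ Y) := hSAY
        _ ⊆ H.closedNbhd (A ∪ T) :=
          SimpleGraph.closedNbhd_mono (Set.union_subset_union_right A hYT)
    · exact SimpleGraph.closedNbhd_mono Set.subset_union_right

end Domination

section OpenPacking

variable {V : Type*} {G : SimpleGraph V}

lemma isOpenPacking_eq_isIndep_ong : IsOpenPacking G = IsIndep (ong G) := by
  ext P
  simp only [IsOpenPacking, IsIndep, Set.Pairwise, ong, not_and, not_exists]
  grind

lemma mem_closedNbhd_ong_iff (hG : ∀ v, ∃ w, G.Adj v w) {S : Set V} {u : V} :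
    u ∈ (ong G).closedNbhd S ↔ ∃ s ∈ S, ∃ w, G.Adj s w ∧ G.Adj u w := by
  refine ⟨?_, fun ⟨s, hs, w, hsw, huw⟩ => ?_⟩
  · rintro (hu | ⟨s, hs, -, w, hsw, huw⟩)
    · obtain ⟨w, huw⟩ := hG u
      exact ⟨u, hu, w, huw, huw⟩
    · exact ⟨s, hs, w, hsw, huw⟩
  · by_cases hsu : s = u
    · exact Or.inl (hsu ▸ hs)
    · exact Or.inr ⟨s, hs, hsu, w, hsw, huw⟩

end OpenPacking

namespace SimpleGraph

variable {V : Type*} {G : SimpleGraph V}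

lemma exists_adj_ne {u : V} [Fintype (G.neighborSet u)] (hδ : 2 ≤ G.degree u) (w : V) :
    ∃ v, G.Adj u v ∧ v ≠ w := by
  rw [← card_neighborSet_eq_degree, ← Set.toFinset_card, ← Set.ncard_eq_toFinset_card'] at hδ
  obtain ⟨v, huv, hvw⟩ := (G.neighborSet u).exists_ne_of_one_lt_ncard hδ w
  exact ⟨v, huv, hvw⟩

lemma egirth_le_length_add_length {a b : V} {p q : G.Walk a b} (hp : p.IsPath) (hq : q.IsPath)
    (hpq : p ≠ q) : G.egirth ≤ p.length + q.length := by
  classical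
  -- `H`, spanned by the edges of `p` and `q`, carries two distinct paths, hence a cycle, and
  -- a cycle of `H` has at most `p.length + q.length` edges.
  let H := fromEdgeSet {e | e ∈ p.edges ∨ e ∈ q.edges}
  have hHG : H ≤ G := by
    rintro u v ⟨he | he, -⟩
    exacts [p.adj_of_mem_edges he, q.adj_of_mem_edges he]
  have hpH : ∀ e ∈ p.edges, e ∈ H.edgeSet := fun e he => by
    rw [edgeSet_fromEdgeSet]
    exact ⟨Or.inl he, G.not_isDiag_of_mem_edgeSet (p.edges_subset_edgeSet he)⟩
  have hqH : ∀ e ∈ q.edges, e ∈ H.edgeSet := fun e he => by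
    rw [edgeSet_fromEdgeSet]
    exact ⟨Or.inr he, G.not_isDiag_of_mem_edgeSet (q.edges_subset_edgeSet he)⟩
  have hH : ¬ H.IsAcyclic := fun hac => hpq <| by
    have hpq' := (hac.subsingleton_path a b).elim ⟨p.transfer H hpH, hp.transfer _⟩
      ⟨q.transfer H hqH, hq.transfer _⟩
    have := congrArg (fun r : H.Path a b =>
      r.val.transfer G fun e he => edgeSet_mono hHG (r.val.edges_subset_edgeSet he)) hpq'
    simpa only [Walk.transfer_transfer, Walk.transfer_self] using this
  obtain ⟨c, w, hw, hwH⟩ := exists_egirth_eq_length.mpr hH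
  have hwpq : w.edges ⊆ p.edges ++ q.edges := fun e he => by
    have := w.edges_subset_edgeSet he
    rw [edgeSet_fromEdgeSet] at this
    exact List.mem_append.mpr this.1
  have hlen : w.length ≤ p.length + q.length := by
    simpa only [Walk.length_edges, List.length_append] using
      (List.subperm_of_subset hw.edges_nodup hwpq).length_le
  calc G.egirth ≤ H.egirth := egirth_anti hHG
    _ = w.length := hwH
    _ ≤ p.length + q.length := by exact_mod_cast hlen

lemma le_length_add_length_of_le_egirth {n : ℕ} (hg : n ≤ G.egirth) {a b : V}
    {p q : G.Walk a b} (hp : p.IsPath) (hq : q.IsPath) (hpq : p ≠ q) :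
    n ≤ p.length + q.length := by
  exact_mod_cast hg.trans (egirth_le_length_add_length hp hq hpq)

lemma Reachable.exists_path_to_length_eq_dist {z u : V} (hr : G.Reachable z u) :
    ∃ p : G.Walk u z, p.IsPath ∧ p.length = G.dist z u :=
  dist_comm (G := G) ▸ hr.symm.exists_path_of_dist

lemma Walk.isPath_cons_of_length_le_dist {u v z : V} (h : G.Adj u v) {p : G.Walk v z}
    (hp : p.IsPath) (hlen : p.length ≤ G.dist u z) : (Walk.cons h p).IsPath := by
  classical
  refine Walk.cons_isPath_iff h p |>.mpr ⟨hp, fun hu => ?_⟩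
  have := Walk.length_dropUntil_lt_length hu h.ne
  have := dist_le (p.dropUntil u hu)
  omega

lemma dist_ne_of_adj {n : ℕ} (hg : n ≤ G.egirth) {z u v : V} (hr : G.Reachable z u)
    (h : G.Adj u v) (hn : 2 * G.dist z u + 1 < n) : G.dist z u ≠ G.dist z v := by
  intro hd
  obtain ⟨pu, hpu, hlu⟩ := hr.exists_path_to_length_eq_dist
  obtain ⟨pv, hpv, hlv⟩ := (hr.trans h.reachable).exists_path_to_length_eq_dist
  have hpath := Walk.isPath_cons_of_length_le_dist h hpv (by rw [dist_comm]; omega)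
  have hne : pu ≠ Walk.cons h pv := fun he => by
    have := congrArg Walk.length he
    rw [Walk.length_cons] at this
    omega
  have := le_length_add_length_of_le_egirth hg hpu hpath hne
  rw [Walk.length_cons] at this
  omega

lemma Adj.dist_eq_add_one_or {n : ℕ} (hg : n ≤ G.egirth) {z u v : V} (hr : G.Reachable z u)
    (h : G.Adj u v) (hn : 2 * G.dist z u + 1 < n) :
    G.dist z v = G.dist z u + 1 ∨ G.dist z u = G.dist z v + 1 := by
  have := dist_ne_of_adj hg hr h hn
  have := h.diff_dist_adj (u := z)
  omega

lemma eq_of_adj_of_dist_add_one_eq {n : ℕ} (hg : n ≤ G.egirth) {z u w₁ w₂ : V}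
    (h₁ : G.Adj w₁ u) (h₂ : G.Adj w₂ u) (hd₁ : G.dist z w₁ + 1 = G.dist z u)
    (hd₂ : G.dist z w₂ + 1 = G.dist z u) (hn : 2 * G.dist z u < n) : w₁ = w₂ := by
  by_contra hne
  have hr : G.Reachable z u := Reachable.of_dist_ne_zero (by omega)
  obtain ⟨p₁, hp₁, hl₁⟩ := (hr.trans h₁.symm.reachable).exists_path_to_length_eq_dist
  obtain ⟨p₂, hp₂, hl₂⟩ := (hr.trans h₂.symm.reachable).exists_path_to_length_eq_dist
  have hpath₁ := Walk.isPath_cons_of_length_le_dist h₁.symm hp₁ (by rw [dist_comm]; omega)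
  have hpath₂ := Walk.isPath_cons_of_length_le_dist h₂.symm hp₂ (by rw [dist_comm]; omega)
  have hpq : Walk.cons h₁.symm p₁ ≠ Walk.cons h₂.symm p₂ := fun he => hne <| by
    simpa only [Walk.snd_cons] using congrArg Walk.snd he
  have := le_length_add_length_of_le_egirth hg hpath₁ hpath₂ hpq
  rw [Walk.length_cons, Walk.length_cons] at this
  omega

lemma exists_adj_dist_add_one_eq {z u : V} (hu : G.dist z u ≠ 0) :
    ∃ w, G.Adj w u ∧ G.dist z w + 1 = G.dist z u := by
  obtain ⟨p, -, hp⟩ := (Reachable.of_dist_ne_zero hu).exists_path_to_length_eq_dist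
  cases p with
  | nil => exact absurd dist_self hu
  | @cons _ w _ h q =>
    refine ⟨w, h.symm, ?_⟩
    have := dist_le q
    have := h.diff_dist_adj (u := z)
    rw [Walk.length_cons, dist_comm (u := w)] at *
    omega

lemma exists_adj_dist_eq_add_one {n : ℕ} (hg : n ≤ G.egirth) {z u : V}
    [Fintype (G.neighborSet u)] (hδ : 2 ≤ G.degree u) (hu : G.dist z u ≠ 0)
    (hn : 2 * G.dist z u + 2 < n) : ∃ v, G.Adj u v ∧ G.dist z v = G.dist z u + 1 := by
  obtain ⟨w, hwu, hw⟩ := exists_adj_dist_add_one_eq hu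
  obtain ⟨v, huv, hvw⟩ := exists_adj_ne hδ w
  rcases huv.dist_eq_add_one_or hg (Reachable.of_dist_ne_zero hu) (by omega) with hv | hv
  · exact ⟨v, huv, hv⟩
  · exact absurd (eq_of_adj_of_dist_add_one_eq hg huv.symm hwu hv.symm hw (by omega)) hvw

end SimpleGraph

section OpenPackingLevels

variable {V : Type*} {G : SimpleGraph V}

lemma isOpenPacking_of_dist_eq {n : ℕ} (hg : n ≤ G.egirth) {z : V} {P : Set V} {k : ℕ}
    (hk : 0 < k) (hn : 2 * k + 2 < n) (hP : ∀ v ∈ P, G.dist z v = k)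
    (hparent : ∀ v₁ ∈ P, ∀ v₂ ∈ P, ∀ w, G.Adj v₁ w → G.Adj v₂ w →
      G.dist z w + 1 = k → v₁ = v₂) :
    IsOpenPacking G P := by
  rintro v₁ hv₁ v₂ hv₂ hne w ⟨h₁, h₂⟩
  have hd₁ := hP v₁ hv₁
  have hd₂ := hP v₂ hv₂
  have hr : G.Reachable z v₁ := Reachable.of_dist_ne_zero (by omega)
  rcases h₁.dist_eq_add_one_or hg hr (by omega) with hw | hw
  · exact hne (eq_of_adj_of_dist_add_one_eq (z := z) hg h₁ h₂ (by omega) (by omega) (by omega))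
  · exact hne (hparent v₁ hv₁ v₂ hv₂ w h₁ h₂ (by omega))

lemma exists_isOpenPacking_dist_eq_two [G.LocallyFinite] {n : ℕ}
    (hg : n ≤ G.egirth) (hn : 6 < n) (hδ : ∀ v, 2 ≤ G.degree v) (z : V) :
    ∃ S : Set V, IsOpenPacking G S ∧ S.ncard = G.degree z ∧ (∀ s ∈ S, G.dist z s = 2) ∧
      ∀ a, G.Adj z a → ∃ s ∈ S, G.Adj a s := by
  choose x hx using fun a : G.neighborSet z => exists_adj_ne (hδ a) z
  have hdist : ∀ a, G.dist z (x a) = 2 := fun a => by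
    have ha : G.dist z a = 1 := dist_eq_one_iff_adj.mpr a.2
    have hr : G.Reachable z (x a) := a.2.reachable.trans (hx a).1.reachable
    have := (hr.pos_dist_of_ne (hx a).2.symm).ne'
    have := (hx a).1.dist_eq_add_one_or hg a.2.reachable (by omega)
    omega
  have hparent : ∀ a (w : V), G.Adj w (x a) → G.dist z w = 1 → w = a := fun a w hw hw1 =>
    eq_of_adj_of_dist_add_one_eq hg hw (hx a).1 (by rw [hw1, hdist])
      (by rw [hdist, dist_eq_one_iff_adj.mpr a.2]) (by rw [hdist]; omega)
  have hinj : Function.Injective x := fun a b hab =>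
    Subtype.ext (hparent b a (hab ▸ (hx a).1) (dist_eq_one_iff_adj.mpr a.2))
  refine ⟨Set.range x, ?_, ?_, ?_,
    fun a ha => ⟨x ⟨a, ha⟩, ⟨_, rfl⟩, (hx ⟨a, ha⟩).1⟩⟩
  · refine isOpenPacking_of_dist_eq hg (z := z) (k := 2) (by omega) (by omega) ?_ ?_
    · rintro _ ⟨a, rfl⟩
      exact hdist a
    · rintro _ ⟨a, rfl⟩ _ ⟨b, rfl⟩ w ha hb hw
      have hwa := hparent a w ha.symm (by omega)
      have hwb := hparent b w hb.symm (by omega)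
      exact congrArg x (Subtype.ext (hwa.symm.trans hwb))
  · rw [Set.ncard_range_of_injective hinj, Nat.card_eq_fintype_card, card_neighborSet_eq_degree]
  · rintro _ ⟨a, rfl⟩
    exact hdist a

lemma exists_isOpenPacking_dist_eq_add_two [G.LocallyFinite] {n : ℕ}
    (hg : n ≤ G.egirth) (hδ : ∀ v, 2 ≤ G.degree v) (z : V) {k : ℕ} (hk : 0 < k)
    (hn : 2 * k + 6 < n) :
    ∃ Y : Set V, IsOpenPacking G Y ∧ (∀ y ∈ Y, G.dist z y = k + 2) ∧
      ∀ u, G.dist z u = k → ∃ y ∈ Y, ∃ w, G.Adj y w ∧ G.Adj u w := by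
  have hgrandchild : ∀ u : {u // G.dist z u = k}, ∃ c y, G.Adj u c ∧ G.Adj c y ∧
      G.dist z c = k + 1 ∧ G.dist z y = k + 2 := fun ⟨u, hu⟩ => by
    obtain ⟨c, huc, hc⟩ := exists_adj_dist_eq_add_one (z := z) hg (hδ u) (by omega) (by omega)
    obtain ⟨y, hcy, hy⟩ := exists_adj_dist_eq_add_one (z := z) hg (hδ c) (by omega) (by omega)
    exact ⟨c, y, huc, hcy, by omega, by omega⟩
  choose c y hcy using hgrandchild
  refine ⟨Set.range y, ?_, ?_, fun u hu => ⟨y ⟨u, hu⟩, ⟨_, rfl⟩, c ⟨u, hu⟩,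
    (hcy ⟨u, hu⟩).2.1.symm, (hcy ⟨u, hu⟩).1⟩⟩
  · refine isOpenPacking_of_dist_eq hg (z := z) (k := k + 2) (by omega) (by omega) ?_ ?_
    · rintro _ ⟨u, rfl⟩
      exact (hcy u).2.2.2
    · rintro _ ⟨u₁, rfl⟩ _ ⟨u₂, rfl⟩ w h₁ h₂ hw
      obtain ⟨huc₁, hcy₁, hc₁, hy₁⟩ := hcy u₁
      obtain ⟨huc₂, hcy₂, hc₂, hy₂⟩ := hcy u₂
      have hw₁ : w = c u₁ :=
        eq_of_adj_of_dist_add_one_eq (z := z) hg h₁.symm hcy₁ (by omega) (by omega) (by omega)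
      have hw₂ : w = c u₂ :=
        eq_of_adj_of_dist_add_one_eq (z := z) hg h₂.symm hcy₂ (by omega) (by omega) (by omega)
      have : u₁ = u₂ := Subtype.ext <|
        eq_of_adj_of_dist_add_one_eq hg huc₁ (hw₁ ▸ hw₂ ▸ huc₂) (by rw [u₁.2]; omega)
          (by rw [u₂.2]; omega) (by omega)
      rw [this]
  · rintro _ ⟨u, rfl⟩
    exact (hcy u).2.2.2

lemma closedNbhd_ong_singleton_subset (hG : ∀ v, ∃ w, G.Adj v w) {z : V} {S : Set V}
    (hS : ∀ a, G.Adj z a → ∃ s ∈ S, G.Adj a s) :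
    (ong G).closedNbhd {z} ⊆ (ong G).closedNbhd S := by
  intro u hu
  obtain ⟨_, rfl, w, hzw, huw⟩ := (mem_closedNbhd_ong_iff hG).mp hu
  obtain ⟨s, hs, hws⟩ := hS w hzw
  exact (mem_closedNbhd_ong_iff hG).mpr ⟨s, hs, w, hws.symm, huw⟩

lemma dist_le_add_two_of_mem_closedNbhd_ong (hG : ∀ v, ∃ w, G.Adj v w) {z u : V} {S : Set V}
    {k : ℕ} (hS : ∀ s ∈ S, G.dist z s ≤ k) (hu : u ∈ (ong G).closedNbhd S) :
    G.dist z u ≤ k + 2 := by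
  obtain ⟨s, hs, w, hsw, huw⟩ := (mem_closedNbhd_ong_iff hG).mp hu
  have := hsw.diff_dist_adj (u := z)
  have := huw.symm.diff_dist_adj (u := z)
  have := hS s hs
  omega

lemma closedNbhd_ong_subset_union {n : ℕ} (hg : n ≤ G.egirth) (hn : 7 < n)
    (hG : ∀ v, ∃ w, G.Adj v w) {z : V} {S Y : Set V} (hS : ∀ s ∈ S, G.dist z s = 2)
    (hY : ∀ u, G.dist z u = 4 → ∃ y ∈ Y, ∃ w, G.Adj y w ∧ G.Adj u w) :
    (ong G).closedNbhd S ⊆ (ong G).closedNbhd ({z} ∪ Y) := by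
  intro u hu
  obtain ⟨s, hs, w, hsw, huw⟩ := (mem_closedNbhd_ong_iff hG).mp hu
  rw [mem_closedNbhd_ong_iff hG]
  have hds := hS s hs
  have hrs : G.Reachable z s := Reachable.of_dist_ne_zero (by omega)
  rcases hsw.dist_eq_add_one_or hg hrs (by omega) with hw3 | hw1
  · rcases huw.symm.dist_eq_add_one_or hg (hrs.trans hsw.reachable) (by omega) with hu4 | hu2
    · obtain ⟨y, hy, hyu⟩ := hY u (by omega)
      exact ⟨y, Or.inr hy, hyu⟩
    · obtain ⟨m, hmu, hm⟩ := exists_adj_dist_add_one_eq (show G.dist z u ≠ 0 by omega)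
      exact ⟨z, Or.inl rfl, m, dist_eq_one_iff_adj.mp (by omega), hmu.symm⟩
  · exact ⟨z, Or.inl rfl, w, dist_eq_one_iff_adj.mp (by omega), huw⟩

end OpenPackingLevels

theorem stmt12 {V : Type*} [Fintype V] [Nonempty V] (G : SimpleGraph V)
    [DecidableRel G.Adj] (hg : 15 ≤ G.egirth) (hδ : ∀ v, 2 ≤ G.degree v) :
    ∃ P Q, Maximal (IsOpenPacking G) P ∧ Maximal (IsOpenPacking G) Q ∧
      P.ncard ≠ Q.ncard := by
  obtain ⟨z⟩ := ‹Nonempty V›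
  have hG : ∀ v, ∃ w, G.Adj v w := fun v => (exists_adj_ne (hδ v) v).imp fun _ h => h.1
  obtain ⟨S, hS, hScard, hSdist, hSadj⟩ :=
    exists_isOpenPacking_dist_eq_two (n := 15) hg (by omega) hδ z
  obtain ⟨Y, hY, hYdist, hYadj⟩ :=
    exists_isOpenPacking_dist_eq_add_two (n := 15) hg hδ z (k := 4) (by omega) (by omega)
  rw [isOpenPacking_eq_isIndep_ong] at hS hY ⊢
  have hYS : Disjoint Y ((ong G).closedNbhd S) := Set.disjoint_left.mpr fun y hy hyS => by
    have := dist_le_add_two_of_mem_closedNbhd_ong hG (fun s hs => (hSdist s hs).le) hyS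
    have := hYdist y hy
    omega
  refine exists_maximal_isIndep_ncard_ne hS (Set.pairwise_singleton z _) hY
    (closedNbhd_ong_singleton_subset hG hSadj) hYS
    (closedNbhd_ong_subset_union (n := 15) hg (by omega) hG hSdist hYadj) ?_
  rw [Set.ncard_singleton, hScard]
  exact hδ z
end
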